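/- arXiv:1705.06598 — 3 statements merged into one kernel-verified Lean document; each statement's English description precedes it below -/
import Mathlib

section
/- Fix Δ > 0, real constants c_k^l (1 ≤ k ≤ d, 1 ≤ l ≤ m) not all zero, and distinct positive reals λ₁,…,λ_d with Δλ_k and Δ(λ_j ± λ_k) (j ≠ k) not multiples of 2π. Define σ_{nr}² = Σ_{l=1}^m ∫_{t₀+(r−1)Δ}^{t₀+rΔ} (Σ_{k=1}^d c_k^l sin(λ_k(t_n − s)))² ds with t_n = t₀ + nΔ, and s_n² = Σ_{r=1}^n σ_{nr}². Then s_n² = (Δ/2) Σ_{l,k} (c_k^l)² · n + C_n with C_n uniformly bounded in n; in particular lim_{n→∞} s_n²/n = (Δ/2) Σ_{l=1}^m Σ_{k=1}^d (c_k^l)² > 0. -/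
/-!
Reversing time, `s_n² = Σ_l ∫₀^{nΔ} f_l(u)² du` with `f_l(u) = Σ_k c_k^l sin(λ_k u)`.
By the product-to-sum formula, `f_l²` is the constant `½ Σ_k (c_k^l)²` plus cosines with the
nonzero frequencies `λ_j - λ_k` (`j ≠ k`) and `λ_j + λ_k`, and `|∫₀^T cos(μu) du| ≤ 1/|μ|`
for `μ ≠ 0`. Hence `∫₀^T f_l²` equals `(T/2) Σ_k (c_k^l)²` up to an error bounded uniformly in `T`.
-/

open intervalIntegral Filter Real Finset

lemma integral_cos_mul_of_ne_zero {μ : ℝ} (hμ : μ ≠ 0) (T : ℝ) :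
    ∫ u in (0 : ℝ)..T, cos (μ * u) = sin (μ * T) / μ := by
  rw [integral_comp_mul_left (fun x => cos x) hμ, integral_cos]
  simp [div_eq_inv_mul]

lemma abs_integral_cos_mul_le {μ : ℝ} (hμ : μ ≠ 0) (T : ℝ) :
    |∫ u in (0 : ℝ)..T, cos (μ * u)| ≤ |μ|⁻¹ := by
  rw [integral_cos_mul_of_ne_zero hμ, abs_div, div_eq_mul_inv]
  exact mul_le_of_le_one_left (by positivity) (abs_sin_le_one _)

lemma abs_integral_sum_mul_cos_le {α : Type*} (s : Finset α) (b μ : α → ℝ)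
    (hμ : ∀ i ∈ s, μ i ≠ 0) (T : ℝ) :
    |∫ u in (0 : ℝ)..T, ∑ i ∈ s, b i * cos (μ i * u)| ≤ ∑ i ∈ s, |b i| * |μ i|⁻¹ := by
  rw [integral_finsetSum fun i _ => Continuous.intervalIntegrable (by fun_prop) _ _]
  refine (abs_sum_le_sum_abs _ _).trans (sum_le_sum fun i hi => ?_)
  rw [integral_const_mul, abs_mul]
  exact mul_le_mul_of_nonneg_left (abs_integral_cos_mul_le (hμ i hi) T) (abs_nonneg _)

lemma sq_sum_mul_sin_eq {ι : Type*} [Fintype ι] [DecidableEq ι] (a lam : ι → ℝ) (u : ℝ) :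
    (∑ k, a k * sin (lam k * u)) ^ 2 =
      (∑ k, a k ^ 2) / 2
        + ∑ p ∈ univ.offDiag, a p.1 * a p.2 / 2 * cos ((lam p.1 - lam p.2) * u)
        - ∑ p : ι × ι, a p.1 * a p.2 / 2 * cos ((lam p.1 + lam p.2) * u) := by
  have hprod : ∀ j k, a j * sin (lam j * u) * (a k * sin (lam k * u))
      = a j * a k / 2 * cos ((lam j - lam k) * u) - a j * a k / 2 * cos ((lam j + lam k) * u) := by
    intro j k
    rw [sub_mul, add_mul, cos_sub, cos_add]
    ring
  rw [sq, sum_mul_sum, ← Fintype.sum_prod_type', ← univ_product_univ]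
  simp_rw [hprod, sum_sub_distrib, ← diag_union_offDiag, sum_union (disjoint_diag_offDiag _),
    sum_diag, sub_self, zero_mul, cos_zero, mul_one, sum_div, sq]

lemma exists_abs_integral_sq_sum_mul_sin_sub_le {ι : Type*} [Fintype ι] (a lam : ι → ℝ)
    (hpos : ∀ k, 0 < lam k) (hinj : Function.Injective lam) :
    ∃ C, ∀ T, |(∫ u in (0 : ℝ)..T, (∑ k, a k * sin (lam k * u)) ^ 2) - T / 2 * ∑ k, a k ^ 2|
      ≤ C := by
  classical
  refine ⟨∑ p ∈ (univ : Finset ι).offDiag, |a p.1 * a p.2 / 2| * |lam p.1 - lam p.2|⁻¹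
    + ∑ p : ι × ι, |a p.1 * a p.2 / 2| * |lam p.1 + lam p.2|⁻¹, fun T => ?_⟩
  have hdiff : ∀ p ∈ (univ : Finset ι).offDiag, lam p.1 - lam p.2 ≠ 0 := fun p hp =>
    sub_ne_zero.mpr (hinj.ne (mem_offDiag.mp hp).2.2)
  have hsum : ∀ p ∈ (univ : Finset (ι × ι)), lam p.1 + lam p.2 ≠ 0 := fun p _ =>
    (add_pos (hpos p.1) (hpos p.2)).ne'
  simp_rw [sq_sum_mul_sin_eq]
  rw [integral_sub, integral_add, integral_const, smul_eq_mul, sub_zero]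
  · refine (congrArg abs ?_).trans_le ((abs_sub _ _).trans (add_le_add
      (abs_integral_sum_mul_cos_le _ _ _ hdiff T) (abs_integral_sum_mul_cos_le _ _ _ hsum T)))
    ring
  all_goals exact Continuous.intervalIntegrable (by fun_prop) _ _

lemma sum_integral_Icc_eq_integral {f : ℝ → ℝ} (hf : Continuous f) (t₀ Δ : ℝ) (n : ℕ) :
    ∑ r ∈ Icc 1 n, ∫ s in (t₀ + ((r : ℝ) - 1) * Δ)..(t₀ + r * Δ), f s
      = ∫ s in t₀..(t₀ + n * Δ), f s := by
  have hadj := sum_integral_adjacent_intervals (a := fun k : ℕ => t₀ + k * Δ) (n := n)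
    fun _ _ => hf.intervalIntegrable (μ := MeasureTheory.volume) _ _
  rw [← Ico_add_one_right_eq_Icc, sum_Ico_eq_sum_range]
  simpa [add_comm] using hadj

lemma sum_integral_Icc_comp_sub_eq {g : ℝ → ℝ} (hg : Continuous g) (t₀ Δ : ℝ) (n : ℕ) :
    ∑ r ∈ Icc 1 n, ∫ s in (t₀ + ((r : ℝ) - 1) * Δ)..(t₀ + r * Δ), g ((t₀ + n * Δ) - s)
      = ∫ u in (0 : ℝ)..(n * Δ), g u := by
  rw [sum_integral_Icc_eq_integral (by fun_prop)]
  simp [integral_comp_sub_left]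

lemma tendsto_div_natCast_of_abs_sub_mul_le {f : ℕ → ℝ} {L C : ℝ}
    (h : ∀ n : ℕ, |f n - L * n| ≤ C) : Tendsto (fun n : ℕ => f n / n) atTop (nhds L) := by
  have hsmall : Tendsto (fun n : ℕ => (f n - L * n) / n) atTop (nhds 0) := by
    refine squeeze_zero_norm (fun n => ?_) (tendsto_const_div_atTop_nhds_zero_nat C)
    rw [Real.norm_eq_abs, abs_div, Nat.abs_cast]
    exact div_le_div_of_nonneg_right (h n) n.cast_nonneg
  have hlim := (tendsto_const_nhds (x := L)).add hsmall
  rw [add_zero] at hlim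
  refine hlim.congr' ?_
  filter_upwards [eventually_ne_atTop 0] with n hn
  field_simp
  ring

theorem variance_growth_continuous_general {d m : ℕ}
    (Δ t₀ : ℝ) (hΔ : 0 < Δ)
    (c : Fin m → Fin d → ℝ) (hc : ∃ l k, c l k ≠ 0)
    (lam : Fin d → ℝ) (hpos : ∀ k, 0 < lam k) (hinj : Function.Injective lam)
    (σ2 : ℕ → ℕ → ℝ)
    (hσ2 : ∀ n r, σ2 n r = ∑ l, ∫ s in (t₀ + ((r : ℝ) - 1) * Δ)..(t₀ + r * Δ),
        (∑ k, c l k * Real.sin (lam k * ((t₀ + n * Δ) - s))) ^ 2)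
    (s2 : ℕ → ℝ) (hs2 : ∀ n, s2 n = ∑ r ∈ Finset.Icc 1 n, σ2 n r) :
    (∃ C : ℝ, ∀ n : ℕ, |s2 n - (Δ / 2) * (∑ l, ∑ k, (c l k) ^ 2) * n| ≤ C)
    ∧ Filter.Tendsto (fun n : ℕ => s2 n / n) Filter.atTop
        (nhds ((Δ / 2) * ∑ l, ∑ k, (c l k) ^ 2))
    ∧ 0 < (Δ / 2) * ∑ l, ∑ k, (c l k) ^ 2 := by
  have hs2_eq (n : ℕ) :
      s2 n = ∑ l, ∫ u in (0 : ℝ)..(n * Δ), (∑ k, c l k * sin (lam k * u)) ^ 2 := by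
    simp_rw [hs2, hσ2]
    rw [sum_comm]
    exact sum_congr rfl fun l _ => sum_integral_Icc_comp_sub_eq
      (g := fun u => (∑ k, c l k * sin (lam k * u)) ^ 2) (by fun_prop) t₀ Δ n
  choose C hC using fun l => exists_abs_integral_sq_sum_mul_sin_sub_le (c l) lam hpos hinj
  have hbound (n : ℕ) : |s2 n - (Δ / 2) * (∑ l, ∑ k, c l k ^ 2) * n| ≤ ∑ l, C l := by
    have hsplit : s2 n - (Δ / 2) * (∑ l, ∑ k, c l k ^ 2) * n = ∑ l,
        ((∫ u in (0 : ℝ)..(n * Δ), (∑ k, c l k * sin (lam k * u)) ^ 2)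
          - n * Δ / 2 * ∑ k, c l k ^ 2) := by
      rw [hs2_eq, sum_sub_distrib, mul_sum, sum_mul]
      congr 1
      exact sum_congr rfl fun l _ => by ring
    rw [hsplit]
    exact (abs_sum_le_sum_abs _ _).trans (sum_le_sum fun l _ => hC l _)
  have hcoeff : 0 < ∑ l, ∑ k, c l k ^ 2 := by
    obtain ⟨l, k, hlk⟩ := hc
    exact sum_pos' (fun l _ => sum_nonneg fun k _ => sq_nonneg _)
      ⟨l, mem_univ l, sum_pos' (fun k _ => sq_nonneg _) ⟨k, mem_univ k, by positivity⟩⟩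
  exact ⟨⟨_, hbound⟩, tendsto_div_natCast_of_abs_sub_mul_le hbound, by positivity⟩

/-- Asymptotics of the variance `s_n²` of the weighted sums of stochastic integrals of
trigonometric integrands over consecutive intervals of length `Δ`:
`s_n² = (Δ/2) Σ_{l,k} (c_k^l)² · n + C_n` with `C_n` uniformly bounded, hence
`s_n²/n → (Δ/2) Σ_{l,k} (c_k^l)² > 0`. -/
theorem variance_growth_continuous {d m : ℕ}
    (Δ t₀ : ℝ) (hΔ : 0 < Δ) (ht₀ : 0 ≤ t₀)
    (c : Fin m → Fin d → ℝ) (hc : ∃ l k, c l k ≠ 0)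
    (lam : Fin d → ℝ) (hpos : ∀ k, 0 < lam k) (hinj : Function.Injective lam)
    (h1 : ∀ k, ¬ ∃ z : ℤ, Δ * lam k = 2 * Real.pi * z)
    (h2 : ∀ j k, j ≠ k → ¬ ∃ z : ℤ, Δ * (lam j + lam k) = 2 * Real.pi * z)
    (h3 : ∀ j k, j ≠ k → ¬ ∃ z : ℤ, Δ * (lam j - lam k) = 2 * Real.pi * z)
    (σ2 : ℕ → ℕ → ℝ)
    (hσ2 : ∀ n r, σ2 n r = ∑ l, ∫ s in (t₀ + ((r : ℝ) - 1) * Δ)..(t₀ + r * Δ),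
        (∑ k, c l k * Real.sin (lam k * ((t₀ + n * Δ) - s))) ^ 2)
    (s2 : ℕ → ℝ) (hs2 : ∀ n, s2 n = ∑ r ∈ Finset.Icc 1 n, σ2 n r) :
    (∃ C : ℝ, ∀ n : ℕ, |s2 n - (Δ / 2) * (∑ l, ∑ k, (c l k) ^ 2) * n| ≤ C)
    ∧ Filter.Tendsto (fun n : ℕ => s2 n / n) Filter.atTop
        (nhds ((Δ / 2) * ∑ l, ∑ k, (c l k) ^ 2))
    ∧ 0 < (Δ / 2) * ∑ l, ∑ k, (c l k) ^ 2 :=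
  variance_growth_continuous_general Δ t₀ hΔ c hc lam hpos hinj σ2 hσ2 s2 hs2
end

section
/- Fix h > 0 and distinct positive λ₁,…,λ_d with h < π/max_k λ_k, and reals c_j > 0, α_j. Define σ_{nr}² = h(Σ_{j=1}^d c_j cos(rλ_j h − α_j))² and s_n² = Σ_{r=0}^n σ_{nr}². Then s_n² = n·(h/2)Σ_{k=1}^d c_k² + C_n with C_n uniformly bounded, and hence lim_{n→∞} s_n²/n = (h/2)Σ_{k=1}^d c_k² > 0. -/
/-!
Expanding the square with `cos a cos b = (cos (a + b) + cos (a - b)) / 2` writes each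
`σ²_r` as the constant `(h/2) Σ c_k²` (from the diagonal `a = b`) plus trigonometric terms
`cos (r θ + φ)` whose frequencies `θ` are `h(λ_j + λ_k)` or `h(λ_j - λ_k)` with `j ≠ k`.
Since `0 < hλ_k < π` and the `λ_k` are distinct, none of these `θ` is a multiple of `2π`, so
their partial sums over `r` are bounded (a geometric / telescoping sum).
Hence `s_n² - n (h/2) Σ c_k²` is bounded, and dividing by `n` gives the limit.
-/

open Filter Finset Real Topology

def BoundedPartialSums (f : ℕ → ℝ) : Prop :=
  ∃ C, ∀ n, |∑ r ∈ range n, f r| ≤ C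

namespace BoundedPartialSums

variable {f g : ℕ → ℝ}

lemma add (hf : BoundedPartialSums f) (hg : BoundedPartialSums g) :
    BoundedPartialSums (f + g) := by
  obtain ⟨C, hC⟩ := hf
  obtain ⟨D, hD⟩ := hg
  refine ⟨C + D, fun n => ?_⟩
  rw [Pi.add_def, sum_add_distrib]
  exact (abs_add_le _ _).trans (add_le_add (hC n) (hD n))

lemma const_mul (a : ℝ) (hf : BoundedPartialSums f) : BoundedPartialSums fun r => a * f r := by
  obtain ⟨C, hC⟩ := hf
  refine ⟨|a| * C, fun n => ?_⟩
  rw [← mul_sum, abs_mul]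
  exact mul_le_mul_of_nonneg_left (hC n) (abs_nonneg a)

lemma sum {ι : Type*} (s : Finset ι) {f : ι → ℕ → ℝ} (hf : ∀ i ∈ s, BoundedPartialSums (f i)) :
    BoundedPartialSums fun r => ∑ i ∈ s, f i r := by
  classical
  induction s using Finset.induction_on with
  | empty => exact ⟨0, by simp⟩
  | insert i s hi ih =>
    simp_rw [sum_insert hi]
    exact (hf i (mem_insert_self i s)).add (ih fun j hj => hf j (mem_insert_of_mem hj))

lemma exists_abs_sum_range_succ_sub_le {K : ℝ} (hf : BoundedPartialSums fun r => f r - K) :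
    ∃ C, ∀ n : ℕ, |∑ r ∈ range (n + 1), f r - n * K| ≤ C := by
  obtain ⟨C, hC⟩ := hf
  refine ⟨C + |K|, fun n => ?_⟩
  have hsplit : ∑ r ∈ range (n + 1), f r - n * K = ∑ r ∈ range (n + 1), (f r - K) + K := by
    rw [sum_sub_distrib, sum_const, card_range, nsmul_eq_mul]
    push_cast
    ring
  rw [hsplit]
  exact (abs_add_le _ _).trans (add_le_add (hC _) le_rfl)

end BoundedPartialSums

lemma tendsto_div_of_abs_sub_mul_le {a : ℕ → ℝ} {K C : ℝ} (h : ∀ n : ℕ, |a n - n * K| ≤ C) :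
    Tendsto (fun n : ℕ => a n / n) atTop (𝓝 K) := by
  have hdev : Tendsto (fun n : ℕ => (a n - n * K) / n) atTop (𝓝 0) := by
    refine squeeze_zero_norm (fun n => ?_) (tendsto_const_div_atTop_nhds_zero_nat C)
    rw [norm_div, Real.norm_eq_abs, Real.norm_eq_abs, Nat.abs_cast]
    exact div_le_div_of_nonneg_right (h n) n.cast_nonneg
  refine (zero_add K ▸ hdev.add_const K).congr' ?_
  filter_upwards [eventually_ne_atTop 0] with n hn
  field_simp
  ring

-- `2 sin (θ/2) cos (r θ + φ)` telescopes to `sin ((r + 1) θ + φ - θ/2) - sin (r θ + φ - θ/2)`.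
lemma abs_sum_range_cos_le {θ : ℝ} (hθ : sin (θ / 2) ≠ 0) (φ : ℝ) (n : ℕ) :
    |∑ r ∈ range n, cos (r * θ + φ)| ≤ 1 / |sin (θ / 2)| := by
  set f : ℕ → ℝ := fun r => sin (r * θ + φ - θ / 2)
  have hstep : ∀ r : ℕ, 2 * sin (θ / 2) * cos (r * θ + φ) = f (r + 1) - f r := by
    intro r
    simp only [f, sin_sub_sin]
    push_cast
    congr 3 <;> ring
  have htel : 2 * sin (θ / 2) * ∑ r ∈ range n, cos (r * θ + φ) = f n - f 0 := by
    rw [mul_sum, ← sum_range_sub f n]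
    exact sum_congr rfl fun r _ => hstep r
  have hdiff : |f n - f 0| ≤ 2 := by
    calc |f n - f 0| ≤ |f n| + |f 0| := abs_sub _ _
      _ ≤ 1 + 1 := add_le_add (abs_sin_le_one _) (abs_sin_le_one _)
      _ = 2 := by norm_num
  rw [le_div_iff₀ (abs_pos.mpr hθ)]
  have := congrArg abs htel
  rw [abs_mul, abs_mul, abs_two] at this
  linarith

lemma boundedPartialSums_cos {θ : ℝ} (hθ : sin (θ / 2) ≠ 0) (φ : ℝ) :
    BoundedPartialSums fun r => cos (r * θ + φ) :=
  ⟨_, abs_sum_range_cos_le hθ φ⟩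

lemma boundedPartialSums_cos_mul_cos {a b : ℝ} (hadd : sin ((a + b) / 2) ≠ 0)
    (hsub : sin ((a - b) / 2) ≠ 0) (φ ψ : ℝ) :
    BoundedPartialSums fun r => cos (r * a + φ) * cos (r * b + ψ) := by
  convert ((boundedPartialSums_cos hadd (φ + ψ)).add
    (boundedPartialSums_cos hsub (φ - ψ))).const_mul (1 / 2) using 2 with r
  rw [Pi.add_apply, show (r : ℝ) * (a + b) + (φ + ψ) = (r * a + φ) + (r * b + ψ) by ring,
    show (r : ℝ) * (a - b) + (φ - ψ) = (r * a + φ) - (r * b + ψ) by ring,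
    cos_add (r * a + φ), cos_sub (r * a + φ)]
  ring

lemma boundedPartialSums_cos_sq_sub_half {a : ℝ} (ha : sin a ≠ 0) (φ : ℝ) :
    BoundedPartialSums fun r => cos (r * a + φ) ^ 2 - 1 / 2 := by
  convert (boundedPartialSums_cos (θ := 2 * a) (by rwa [mul_div_cancel_left₀ a two_ne_zero])
    (2 * φ)).const_mul (1 / 2) using 2 with r
  rw [cos_sq, show (r : ℝ) * (2 * a) + 2 * φ = 2 * (r * a + φ) by ring]
  ring

lemma sin_half_add_ne_zero {x y : ℝ} (hx : x ∈ Set.Ioo 0 π) (hy : y ∈ Set.Ioo 0 π) :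
    sin ((x + y) / 2) ≠ 0 :=
  (sin_pos_of_pos_of_lt_pi (by linarith [hx.1, hy.1]) (by linarith [hx.2, hy.2])).ne'

lemma sin_half_sub_ne_zero {x y : ℝ} (hx : x ∈ Set.Ioo 0 π) (hy : y ∈ Set.Ioo 0 π)
    (hxy : x ≠ y) : sin ((x - y) / 2) ≠ 0 := by
  rw [Ne, sin_eq_zero_iff_of_lt_of_lt (by linarith [hx.1, hy.2, pi_pos])
    (by linarith [hx.2, hy.1, pi_pos])]
  intro h
  exact hxy (by linarith)

lemma boundedPartialSums_sq_sum_cos_sub {ι : Type*} [Fintype ι] (c θ φ : ι → ℝ)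
    (hθ : ∀ j, θ j ∈ Set.Ioo 0 π) (hinj : Function.Injective θ) :
    BoundedPartialSums fun r => (∑ j, c j * cos (r * θ j + φ j)) ^ 2 - (∑ j, c j ^ 2) / 2 := by
  classical
  have hpair : ∀ j k, BoundedPartialSums fun r : ℕ =>
      c j * cos (r * θ j + φ j) * (c k * cos (r * θ k + φ k)) - if j = k then c j ^ 2 / 2 else 0 := by
    intro j k
    by_cases hjk : j = k
    · subst hjk
      have hsin : sin (θ j) ≠ 0 := by simpa using sin_half_add_ne_zero (hθ j) (hθ j)
      convert (boundedPartialSums_cos_sq_sub_half hsin (φ j)).const_mul (c j ^ 2) using 2 with r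
      rw [if_pos rfl]
      ring
    · convert (boundedPartialSums_cos_mul_cos (sin_half_add_ne_zero (hθ j) (hθ k))
        (sin_half_sub_ne_zero (hθ j) (hθ k) (hinj.ne hjk)) (φ j) (φ k)).const_mul (c j * c k)
        using 2 with r
      rw [if_neg hjk]
      ring
  convert BoundedPartialSums.sum univ fun j _ => BoundedPartialSums.sum univ fun k _ => hpair j k
    using 2 with r
  simp only [sum_sub_distrib, sum_ite_eq, mem_univ, if_true, sq, sum_mul_sum, sum_div]

/-- Asymptotics of the discrete variance `s_n² = Σ_{r=0}^n h(Σ_j c_j cos(rλ_j h − α_j))²`: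
for stepsize `h < π / max_k λ_k` one has `s_n² = n(h/2)Σ c_k² + C_n` with `C_n` uniformly
bounded, hence `s_n²/n → (h/2)Σ c_k² > 0`. -/
theorem discrete_variance_growth {d : ℕ} [NeZero d]
    (lam : Fin d → ℝ) (hpos : ∀ k, 0 < lam k) (hinj : Function.Injective lam)
    (h : ℝ) (hh0 : 0 < h)
    (hh : h < Real.pi / Finset.univ.sup' Finset.univ_nonempty lam)
    (c : Fin d → ℝ) (hc : ∀ j, 0 < c j) (α : Fin d → ℝ)
    (σ2 : ℕ → ℝ)
    (hσ2 : ∀ r : ℕ, σ2 r = h * (∑ j, c j * Real.cos ((r : ℝ) * lam j * h - α j)) ^ 2)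
    (s2 : ℕ → ℝ) (hs2 : ∀ n, s2 n = ∑ r ∈ Finset.range (n + 1), σ2 r) :
    (∃ C : ℝ, ∀ n : ℕ, |s2 n - (n : ℝ) * (h / 2) * ∑ k, (c k) ^ 2| ≤ C)
    ∧ Filter.Tendsto (fun n : ℕ => s2 n / n) Filter.atTop (nhds ((h / 2) * ∑ k, (c k) ^ 2))
    ∧ 0 < (h / 2) * ∑ k, (c k) ^ 2 := by
  set M := univ.sup' univ_nonempty lam
  have hM : 0 < M := (hpos 0).trans_le (le_sup' lam (mem_univ 0))
  have hθ : ∀ j, lam j * h ∈ Set.Ioo 0 π := fun j =>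
    ⟨mul_pos (hpos j) hh0, calc
      lam j * h ≤ M * h := mul_le_mul_of_nonneg_right (le_sup' lam (mem_univ j)) hh0.le
      _ < π := by rwa [mul_comm, ← lt_div_iff₀ hM]⟩
  have hθinj : Function.Injective fun j => lam j * h :=
    fun j k e => hinj (mul_right_cancel₀ hh0.ne' e)
  have hσ : BoundedPartialSums fun r => σ2 r - (h / 2) * ∑ k, c k ^ 2 := by
    convert (boundedPartialSums_sq_sum_cos_sub c _ (fun j => -α j) hθ hθinj).const_mul h
      using 2 with r
    simp_rw [hσ2, mul_assoc, ← sub_eq_add_neg]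
    ring
  obtain ⟨C, hC⟩ := hσ.exists_abs_sum_range_succ_sub_le
  have hbound : ∀ n : ℕ, |s2 n - (n : ℝ) * (h / 2) * ∑ k, c k ^ 2| ≤ C := fun n => by
    rw [hs2, mul_assoc]
    exact hC n
  refine ⟨⟨C, hbound⟩, tendsto_div_of_abs_sub_mul_le fun n => mul_assoc (n : ℝ) _ _ ▸ hbound n, ?_⟩
  exact mul_pos (half_pos hh0) (sum_pos (fun k _ => pow_pos (hc k) 2) univ_nonempty)
end

section
/- Let S_n = Σ_{r=1}^n σ_{nr} η_r with η_r i.i.d. N(0,1), the array {σ_{nr}} bounded and liminf s_n²/n > 0, and let D_n be a deterministic sequence bounded uniformly in n. Then almost surely D_n + S_n > 0 for infinitely many n and D_n + S_n < 0 for infinitely many n. -/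
/-!
`S_n` is a centred Gaussian with variance `s_n² → ∞`, so for every level `K` some `S_n`
exceeds `K` with probability at least `δ = P(N(0,1) > 1) > 0`; hence `(S_n)` is bounded above
with probability at most `1 - δ`. Since `|σ_{nr}| ≤ M`, changing finitely many `η_r` moves every
`S_n` by at most a fixed amount, so boundedness above is a tail event of the independent `η_r`,
and Kolmogorov's 0-1 law makes it null. Applied to `S` and `-S`, this says that `S_n` is a.s.
unbounded in both directions, which a bounded shift `D_n` cannot prevent.
-/

open MeasureTheory ProbabilityTheory Filter Finset
open scoped NNReal ENNReal

lemma bddAbove_range_iff_of_abs_sub_le {u v : ℕ → ℝ} {B : ℝ} (h : ∀ n, |u n - v n| ≤ B) :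
    BddAbove (Set.range u) ↔ BddAbove (Set.range v) := by
  constructor <;> rintro ⟨b, hb⟩ <;> refine ⟨b + B, Set.forall_mem_range.2 fun n => ?_⟩ <;>
    linarith [hb (Set.mem_range_self n), abs_le.1 (h n)]

lemma infinite_setOf_lt_of_not_bddAbove_range {u : ℕ → ℝ} (hu : ¬BddAbove (Set.range u))
    (K : ℝ) : {n | K < u n}.Infinite := by
  rw [← Nat.frequently_atTop_iff_infinite]
  refine fun h => hu (isBoundedUnder_of_eventually_le (a := K) ?_).bddAbove_range
  simpa only [not_lt] using h

lemma tendsto_atTop_of_liminf_div_natCast_pos {f : ℕ → ℝ} (hf : ∀ n, 0 ≤ f n)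
    (h : 0 < atTop.liminf fun n => f n / n) : Tendsto f atTop atTop := by
  set L := atTop.liminf fun n => f n / n
  have hbdd : IsBoundedUnder (· ≥ ·) atTop fun n : ℕ => f n / n :=
    isBoundedUnder_of ⟨0, fun n => div_nonneg (hf n) n.cast_nonneg⟩
  have hlin : Tendsto (fun n : ℕ => L / 2 * n) atTop atTop :=
    tendsto_natCast_atTop_atTop.const_mul_atTop (half_pos h)
  refine tendsto_atTop_mono' atTop ?_ hlin
  filter_upwards [eventually_lt_of_lt_liminf (half_lt_self h) hbdd, eventually_gt_atTop 0]
    with n hn hn0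
  exact ((lt_div_iff₀ (by exact_mod_cast hn0)).1 hn).le

lemma abs_sum_Icc_sub_sum_Ioc_le {c x : ℕ → ℝ} {M : ℝ} (hc : ∀ r, |c r| ≤ M) (N n : ℕ) :
    |∑ r ∈ Icc 1 n, c r * x r - ∑ r ∈ Ioc N n, c r * x r| ≤ M * ∑ r ∈ Icc 1 N, |x r| := by
  have hM : 0 ≤ M := (abs_nonneg _).trans (hc 0)
  have hsub : Ioc N n ⊆ Icc 1 n := fun r hr => by simp only [mem_Ioc, mem_Icc] at hr ⊢; omega
  have hsdiff : Icc 1 n \ Ioc N n ⊆ Icc 1 N := by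
    intro r; simp only [Finset.mem_sdiff, mem_Ioc, mem_Icc]; omega
  rw [← sum_sdiff hsub, add_sub_cancel_right, mul_sum]
  calc |∑ r ∈ Icc 1 n \ Ioc N n, c r * x r|
      ≤ ∑ r ∈ Icc 1 n \ Ioc N n, M * |x r| :=
        (abs_sum_le_sum_abs _ _).trans <| sum_le_sum fun r _ => by
          rw [abs_mul]; exact mul_le_mul_of_nonneg_right (hc r) (abs_nonneg _)
    _ ≤ ∑ r ∈ Icc 1 N, M * |x r| :=
        sum_le_sum_of_subset_of_nonneg hsdiff fun r _ _ => mul_nonneg hM (abs_nonneg _)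

theorem measurableSet_limsup_comap_setOf_bddAbove_range {Ω : Type*} {η : ℕ → Ω → ℝ}
    {σ : ℕ → ℕ → ℝ} {M : ℝ} (hbdd : ∀ n r, |σ n r| ≤ M) :
    MeasurableSet[limsup (fun r => MeasurableSpace.comap (η r) inferInstance) atTop]
      {ω | BddAbove (Set.range fun n => ∑ r ∈ Icc 1 n, σ n r * η r ω)} := by
  rw [limsup_eq_iInf_iSup_of_nat]
  refine MeasurableSpace.measurableSet_iInf.2 fun N => ?_
  have hT : ∀ n, Measurable[⨆ r ≥ N, MeasurableSpace.comap (η r) inferInstance]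
      fun ω => ∑ r ∈ Ioc N n, σ n r * η r ω := fun n =>
    Finset.measurable_sum _ fun r hr => Measurable.const_mul
      ((comap_measurable (η r)).mono (le_iSup₂_of_le r (mem_Ioc.1 hr).1.le le_rfl) le_rfl) _
  convert measurableSet_bddAbove_range hT using 1
  ext ω
  exact bddAbove_range_iff_of_abs_sub_le fun n =>
    abs_sum_Icc_sub_sum_Ioc_le (x := (η · ω)) (hbdd n) N n

section

variable {Ω : Type*} [MeasurableSpace Ω] {μ : Measure Ω}

lemma measure_setOf_bddAbove_range_le [IsProbabilityMeasure μ] {X : ℕ → Ω → ℝ}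
    (hX : ∀ n, Measurable (X n)) {δ : ℝ≥0∞} (h : ∀ K : ℝ, ∃ n, δ ≤ μ {ω | K < X n ω}) :
    μ {ω | BddAbove (Set.range fun n => X n ω)} ≤ 1 - δ := by
  have hunion : {ω | BddAbove (Set.range fun n => X n ω)} = ⋃ K : ℕ, {ω | ∀ n, X n ω ≤ K} := by
    ext ω
    simp only [Set.mem_ofPred_eq, Set.mem_iUnion, bddAbove_def, Set.forall_mem_range]
    refine ⟨fun ⟨b, hb⟩ => ?_, fun ⟨K, hK⟩ => ⟨K, hK⟩⟩
    obtain ⟨K, hK⟩ := exists_nat_ge b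
    exact ⟨K, fun n => (hb n).trans hK⟩
  have hmono : Monotone fun K : ℕ => {ω | ∀ n, X n ω ≤ K} :=
    fun K K' hKK' ω hω n => (hω n).trans (by exact_mod_cast hKK')
  rw [hunion, hmono.measure_iUnion]
  refine iSup_le fun K => ?_
  obtain ⟨n, hn⟩ := h K
  calc μ {ω | ∀ n, X n ω ≤ K} ≤ μ {ω | K < X n ω}ᶜ := measure_mono fun ω hω => not_lt.2 (hω n)
    _ = 1 - μ {ω | K < X n ω} := prob_compl_eq_one_sub (measurableSet_lt measurable_const (hX n))
    _ ≤ 1 - δ := tsub_le_tsub_left hn 1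

lemma map_sum_mul_eq_gaussianReal [IsProbabilityMeasure μ] {ι : Type*} {η : ι → Ω → ℝ}
    (hind : iIndepFun η μ) (hgauss : ∀ r, μ.map (η r) = gaussianReal 0 1) (c : ι → ℝ)
    (t : Finset ι) :
    μ.map (fun ω => ∑ r ∈ t, c r * η r ω) =
      gaussianReal 0 (∑ r ∈ t, .mk (c r ^ 2) (sq_nonneg _)) := by
  have hlaw (r : ι) :
      HasLaw (fun ω => c r * η r ω) (gaussianReal 0 (.mk (c r ^ 2) (sq_nonneg _))) μ := by
    simpa using gaussianReal_const_mul
      ⟨AEMeasurable.of_map_ne_zero (by simp [hgauss r, NeZero.ne]), hgauss r⟩ (c r)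
  have hcind : iIndepFun (fun r ω => c r * η r ω) μ :=
    hind.comp (fun r x => c r * x) fun r => measurable_const_mul _
  induction t using Finset.cons_induction with
  | empty => simp [Measure.map_const]
  | cons i t hi ih =>
    have hindep := (hcind.indepFun_finsetSum_of_notMem₀ (fun r => (hlaw r).aemeasurable) hi).symm
    rw [Finset.sum_fn] at hindep
    have hsum := gaussianReal_add_gaussianReal_of_indepFun hindep (hlaw i).map_eq ih
    rw [zero_add] at hsum
    simp only [sum_cons]
    exact hsum

lemma gaussianReal_Ioi_one_le {v : ℝ≥0} {K : ℝ} (hv : 0 < v) (hK : K ≤ √v) :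
    gaussianReal 0 1 (Set.Ioi 1) ≤ gaussianReal 0 v (Set.Ioi K) := by
  have hmap : (gaussianReal 0 1).map (√v * ·) = gaussianReal 0 v := by
    rw [gaussianReal_map_const_mul, mul_zero, mul_one]
    congr 1
    ext
    exact Real.sq_sqrt v.coe_nonneg
  rw [← hmap, Measure.map_apply (measurable_const_mul _) measurableSet_Ioi]
  refine measure_mono fun x (hx : 1 < x) => ?_
  exact hK.trans_lt (lt_mul_of_one_lt_right (by positivity) hx)

lemma gaussianReal_Ioi_one_pos : 0 < gaussianReal 0 1 (Set.Ioi 1) :=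
  pos_iff_ne_zero.2 fun h => by
    simpa using gaussianReal_absolutelyContinuous' 0 one_ne_zero h

theorem ae_not_bddAbove_range_sum_mul_of_measurable [IsProbabilityMeasure μ] {η : ℕ → Ω → ℝ}
    (hη : ∀ r, Measurable (η r)) (hind : iIndepFun η μ)
    (hgauss : ∀ r, μ.map (η r) = gaussianReal 0 1) {σ : ℕ → ℕ → ℝ} {M : ℝ}
    (hbdd : ∀ n r, |σ n r| ≤ M)
    (hvar : Tendsto (fun n => ∑ r ∈ Icc 1 n, σ n r ^ 2) atTop atTop) :
    ∀ᵐ ω ∂μ, ¬BddAbove (Set.range fun n => ∑ r ∈ Icc 1 n, σ n r * η r ω) := by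
  have hS : ∀ n, Measurable fun ω => ∑ r ∈ Icc 1 n, σ n r * η r ω := fun n =>
    Finset.measurable_sum _ fun r _ => (hη r).const_mul _
  have htail : ∀ K : ℝ, ∃ n, gaussianReal 0 1 (Set.Ioi 1) ≤
      μ {ω | K < ∑ r ∈ Icc 1 n, σ n r * η r ω} := fun K => by
    obtain ⟨n, hn⟩ := (hvar.eventually_gt_atTop (K ^ 2)).exists
    refine ⟨n, ?_⟩
    change _ ≤ μ ((fun ω => ∑ r ∈ Icc 1 n, σ n r * η r ω) ⁻¹' Set.Ioi K)
    rw [← Measure.map_apply (hS n) measurableSet_Ioi, map_sum_mul_eq_gaussianReal hind hgauss]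
    have hv : ((∑ r ∈ Icc 1 n, NNReal.mk (σ n r ^ 2) (sq_nonneg _) : ℝ≥0) : ℝ) =
        ∑ r ∈ Icc 1 n, σ n r ^ 2 := by simp
    refine gaussianReal_Ioi_one_le (NNReal.coe_pos.1 ?_) ((le_abs_self K).trans
      (Real.abs_le_sqrt ?_)) <;> rw [hv]
    · exact (sq_nonneg K).trans_lt hn
    · exact hn.le
  have hlt : μ {ω | BddAbove (Set.range fun n => ∑ r ∈ Icc 1 n, σ n r * η r ω)} < 1 :=
    (measure_setOf_bddAbove_range_le hS htail).trans_lt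
      (ENNReal.sub_lt_self ENNReal.one_ne_top one_ne_zero gaussianReal_Ioi_one_pos.ne')
  have h01 := measure_zero_or_one_of_measurableSet_limsup_atTop
    (fun r => (hη r).comap_le) hind (measurableSet_limsup_comap_setOf_bddAbove_range hbdd)
  rw [ae_iff]
  simpa only [not_not] using h01.resolve_right hlt.ne

theorem ae_not_bddAbove_range_sum_mul [IsProbabilityMeasure μ] {η : ℕ → Ω → ℝ}
    (hind : iIndepFun η μ) (hgauss : ∀ r, μ.map (η r) = gaussianReal 0 1)
    {σ : ℕ → ℕ → ℝ} {M : ℝ} (hbdd : ∀ n r, |σ n r| ≤ M)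
    (hvar : Tendsto (fun n => ∑ r ∈ Icc 1 n, σ n r ^ 2) atTop atTop) :
    ∀ᵐ ω ∂μ, ¬BddAbove (Set.range fun n => ∑ r ∈ Icc 1 n, σ n r * η r ω) := by
  have hη : ∀ r, AEMeasurable (η r) μ := fun r =>
    AEMeasurable.of_map_ne_zero (by simp [hgauss r, NeZero.ne])
  have hmod := ae_not_bddAbove_range_sum_mul_of_measurable (fun r => (hη r).measurable_mk)
    (hind.congr fun r => (hη r).ae_eq_mk)
    (fun r => by rw [← Measure.map_congr (hη r).ae_eq_mk, hgauss]) hbdd hvar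
  filter_upwards [hmod, ae_all_iff.2 fun r => (hη r).ae_eq_mk] with ω hω hηω
  simpa only [hηω] using hω

end

/-- If `S_n = Σ_{r=1}^n σ_{nr} η_r` with `η_r` i.i.d. standard normal, the array `{σ_{nr}}`
bounded, `liminf s_n²/n > 0`, and `D_n` is a uniformly bounded deterministic sequence, then
almost surely `D_n + S_n > 0` infinitely often and `D_n + S_n < 0` infinitely often. -/
theorem bounded_shift_sign_changes {Ω : Type*} [MeasurableSpace Ω]
    (μ : Measure Ω) [IsProbabilityMeasure μ]
    (η : ℕ → Ω → ℝ)
    (hind : iIndepFun η μ)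
    (hgauss : ∀ r, Measure.map (η r) μ = gaussianReal 0 1)
    (σ : ℕ → ℕ → ℝ) (M : ℝ) (hbdd : ∀ n r, |σ n r| ≤ M)
    (S : ℕ → Ω → ℝ) (hS : ∀ n ω, S n ω = ∑ r ∈ Finset.Icc 1 n, σ n r * η r ω)
    (s2 : ℕ → ℝ) (hs2 : ∀ n, s2 n = ∑ r ∈ Finset.Icc 1 n, (σ n r) ^ 2)
    (hliminf : 0 < Filter.atTop.liminf fun n => s2 n / n)
    (D : ℕ → ℝ) (C : ℝ) (hD : ∀ n, |D n| ≤ C) :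
    ∀ᵐ ω ∂μ, {n : ℕ | 0 < D n + S n ω}.Infinite ∧ {n : ℕ | D n + S n ω < 0}.Infinite := by
  obtain rfl : s2 = fun n => ∑ r ∈ Icc 1 n, σ n r ^ 2 := funext hs2
  have hvar := tendsto_atTop_of_liminf_div_natCast_pos
    (fun n => sum_nonneg fun r _ => sq_nonneg (σ n r)) hliminf
  have hup := ae_not_bddAbove_range_sum_mul hind hgauss hbdd hvar
  have hdown := ae_not_bddAbove_range_sum_mul hind hgauss (σ := fun n r => -σ n r)
    (by simpa only [abs_neg] using hbdd) (by simpa only [neg_sq] using hvar)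
  filter_upwards [hup, hdown] with ω hω₁ hω₂
  refine ⟨(infinite_setOf_lt_of_not_bddAbove_range hω₁ C).mono fun n hn => ?_,
    (infinite_setOf_lt_of_not_bddAbove_range hω₂ C).mono fun n hn => ?_⟩
  all_goals
    simp only [Set.mem_ofPred_eq, neg_mul, sum_neg_distrib] at hn ⊢
    linarith [abs_le.1 (hD n), hS n ω]
end
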